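/- arXiv:1612.07679 — 4 statements merged into one kernel-verified Lean document; each statement's English description precedes it below -/
import Mathlib

section
/- Let k be a field with |k| = q (possibly infinite) and t ≥ 1. The 2-Kronecker module I_t (with M₁ = k^{t+1}, M₂ = k^t and maps as in the standard presentation: α₁ the shift sending e_i to e'_{i+1}, α₂ sending e_i to e'_i) is a sum of bristle submodules (i.e., is generated by its submodules of length 2 with simple top) if and only if t + 1 ≤ q + 1, i.e., t ≤ q. More precisely, if J ⊆ k ∪ {∞} indexes bristle types B_c, then I_t is generated by bristles of types in J if and only if |J| ≥ t+1. -/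
open Function Submodule Set

variable (k : Type*) [Field k] (t : ℕ)

/-- `α₁` of the standard presentation of `I_t`: `e_i ↦ e'_{i+1}`, `e_t ↦ 0`. -/
noncomputable def ItA1 : (Fin (t + 1) → k) →ₗ[k] (Fin t → k) :=
  LinearMap.funLeft k k (Fin.castSucc)

/-- `α₂` of the standard presentation of `I_t`: `e_i ↦ e'_i`, `e₀ ↦ 0`. -/
noncomputable def ItA2 : (Fin (t + 1) → k) →ₗ[k] (Fin t → k) :=
  LinearMap.funLeft k k (Fin.succ)

/-- `u` generates in `I_t` a bristle submodule of type `B_c` (`j = some c`)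
respectively of type `B_∞` (`j = none`). -/
def IsBristleGen (j : Option k) (u : Fin (t + 1) → k) : Prop :=
  match j with
  | some c => ItA2 k t u = c • ItA1 k t u ∧ ItA1 k t u ≠ 0
  | none => ItA1 k t u = 0 ∧ ItA2 k t u ≠ 0

/-- `I_t` is generated by bristle submodules whose types lie in `J`. -/
def GenByBristles (J : Set (Option k)) : Prop :=
  span k {u | ∃ j ∈ J, IsBristleGen k t j u} = ⊤ ∧
    span k (ItA1 k t '' {u | ∃ j ∈ J, IsBristleGen k t j u} ∪
      ItA2 k t '' {u | ∃ j ∈ J, IsBristleGen k t j u}) = ⊤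


/-!
A bristle generator of type `c ∈ k` satisfies `u (i + 1) = c • u i`, so it is a multiple of
`(1, c, …, c^t)`; one of type `∞` is a multiple of `e_t`. Both are points `(a^i b^(t-i))_i`
of the rational normal curve over `[a : b] ∈ ℙ¹(k)`. As `α₁` is surjective, `I_t` is generated
by the bristles of types in `J` iff these points span `k^{t+1}`. Any `t + 1` distinct ones do,
by the projective Vandermonde determinant, and fewer than `t + 1` vectors cannot.
-/

lemma toENat_rank_le_encard_of_span_image_eq_top {R M ι : Type*} [Ring R]
    [StrongRankCondition R] [AddCommGroup M] [Module R M] {v : ι → M} {s : Set ι}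
    (h : span R (v '' s) = ⊤) : (Module.rank R M).toENat ≤ s.encard :=
  calc (Module.rank R M).toENat = (Module.rank R (span R (v '' s))).toENat := by
        rw [h, rank_top]
    _ ≤ (v '' s).encard := Cardinal.toENat.monotone' (rank_span_le _)
    _ ≤ s.encard := encard_image_le v s

section

variable {k t}

@[simp] lemma itA1_apply (u : Fin (t + 1) → k) (i : Fin t) : ItA1 k t u i = u i.castSucc := rfl

@[simp] lemma itA2_apply (u : Fin (t + 1) → k) (i : Fin t) : ItA2 k t u i = u i.succ := rfl

lemma itA1_surjective : Surjective (ItA1 k t) :=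
  LinearMap.funLeft_surjective_of_injective k k _ (Fin.castSucc_injective t)

/-- Homogeneous coordinates of the bristle types as points of `ℙ¹(k) = k ∪ {∞}`. -/
def bristleCoord : Option k → k × k
  | some c => (c, 1)
  | none => (1, 0)

variable (t) in
/-- The point of the rational normal curve of degree `t` over the bristle type `j`. -/
def bristleVec (j : Option k) : Fin (t + 1) → k :=
  fun i => (bristleCoord j).1 ^ (i : ℕ) * (bristleCoord j).2 ^ (i.rev : ℕ)

@[simp] lemma bristleVec_some (c : k) :
    bristleVec t (some c) = fun i : Fin (t + 1) => c ^ (i : ℕ) := by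
  ext i
  simp [bristleVec, bristleCoord]

@[simp] lemma bristleVec_none : bristleVec t (none : Option k) = Pi.single (Fin.last t) 1 := by
  ext i
  induction i using Fin.lastCases with
  | last => simp [bristleVec, bristleCoord]
  | cast i =>
    simp [bristleVec, bristleCoord, Fin.castSucc_ne_last, Nat.sub_ne_zero_of_lt i.isLt]

lemma bristleCoord_cross_ne_zero {j j' : Option k} (h : j ≠ j') :
    (bristleCoord j').1 * (bristleCoord j).2 - (bristleCoord j).1 * (bristleCoord j').2 ≠ 0 := by
  cases j <;> cases j' <;> simp_all [bristleCoord, sub_eq_zero, eq_comm]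

lemma isBristleGen_bristleVec (ht : 1 ≤ t) (j : Option k) :
    IsBristleGen k t j (bristleVec t j) := by
  obtain ⟨n, rfl⟩ := Nat.exists_eq_add_of_le' ht
  cases j with
  | some c =>
    refine ⟨?_, fun h => by simpa using congrFun h 0⟩
    ext i
    simp [pow_succ']
  | none =>
    refine ⟨?_, fun h => by simpa using congrFun h (Fin.last n)⟩
    ext i
    simp [Fin.castSucc_ne_last]

lemma IsBristleGen.exists_eq_smul {j : Option k} {u : Fin (t + 1) → k}
    (hu : IsBristleGen k t j u) : ∃ a : k, u = a • bristleVec t j := by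
  cases j with
  | some c =>
    refine ⟨u 0, funext fun i => ?_⟩
    induction i using Fin.induction with
    | zero => simp
    | succ i ih =>
      have hrec : u i.succ = c * u i.castSucc := congrFun hu.1 i
      simp only [Pi.smul_apply, smul_eq_mul, bristleVec_some, Fin.val_succ,
        Fin.val_castSucc] at ih ⊢
      linear_combination hrec + c * ih
  | none =>
    refine ⟨u (Fin.last t), funext fun i => ?_⟩
    induction i using Fin.lastCases with
    | last => simp
    | cast i => simpa [Fin.castSucc_ne_last] using congrFun hu.1 i

lemma span_setOf_isBristleGen (ht : 1 ≤ t) (J : Set (Option k)) :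
    span k {u | ∃ j ∈ J, IsBristleGen k t j u} = span k (bristleVec t '' J) := by
  apply le_antisymm <;> rw [span_le]
  · rintro u ⟨j, hj, hu⟩
    obtain ⟨a, rfl⟩ := hu.exists_eq_smul
    exact smul_mem _ a (subset_span (mem_image_of_mem _ hj))
  · rintro _ ⟨j, hj, rfl⟩
    exact subset_span ⟨j, hj, isBristleGen_bristleVec ht j⟩

lemma genByBristles_iff_span_eq_top (J : Set (Option k)) :
    GenByBristles k t J ↔ span k {u | ∃ j ∈ J, IsBristleGen k t j u} = ⊤ := by
  refine ⟨And.left, fun h => ⟨h, eq_top_iff.2 ?_⟩⟩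
  rw [← LinearMap.range_eq_top.2 itA1_surjective, LinearMap.range_eq_map, ← h, map_span]
  exact span_mono subset_union_left

lemma span_range_bristleVec_eq_top {f : Fin (t + 1) → Option k} (hf : Injective f) :
    span k (range (bristleVec t ∘ f)) = ⊤ := by
  have hdet : (Matrix.projVandermonde (fun i => (bristleCoord (f i)).1)
      (fun i => (bristleCoord (f i)).2)).det ≠ 0 := by
    rw [Matrix.det_projVandermonde]
    exact Finset.prod_ne_zero_iff.2 fun i _ => Finset.prod_ne_zero_iff.2 fun j hj =>
      bristleCoord_cross_ne_zero (hf.ne (Finset.mem_Ioi.1 hj).ne)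
  exact (Matrix.linearIndependent_rows_of_det_ne_zero hdet).span_eq_top_of_card_eq_finrank
    (by simp)

lemma span_bristleVec_image_eq_top_iff {J : Set (Option k)} :
    span k (bristleVec t '' J) = ⊤ ↔ (t + 1 : ℕ∞) ≤ J.encard := by
  refine ⟨fun h => by simpa using toENat_rank_le_encard_of_span_image_eq_top h, fun hJ => ?_⟩
  obtain ⟨f, -⟩ := Fin.Embedding.exists_embedding_disjoint_range_of_add_le_ENat_card
    (s := (∅ : Set J)) (n := t + 1) (by simpa using hJ)
  rw [eq_top_iff, ← span_range_bristleVec_eq_top (Subtype.val_injective.comp f.injective)]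
  exact span_mono (range_subset_iff.2 fun i => mem_image_of_mem _ (f i).2)

end

/-- The module `I_t` is generated by the bristles of the types in
`J ⊆ k ∪ {∞}` if and only if `|J| ≥ t+1`; in particular `I_t` is a sum of
bristle submodules if and only if `t ≤ q` where `q = |k|`. -/
theorem It_generated_by_bristles_iff (ht : 1 ≤ t) :
    (∀ J : Set (Option k), GenByBristles k t J ↔ (t + 1 : ℕ∞) ≤ J.encard) ∧
      (GenByBristles k t Set.univ ↔ (t : Cardinal) ≤ Cardinal.mk k) := by
  have key (J : Set (Option k)) : GenByBristles k t J ↔ (t + 1 : ℕ∞) ≤ J.encard := by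
    rw [genByBristles_iff_span_eq_top, span_setOf_isBristleGen ht,
      span_bristleVec_image_eq_top_iff]
  refine ⟨key, ?_⟩
  rw [key, ← toENat_cardinalMk, Cardinal.mk_univ, Cardinal.mk_option, map_add, map_one,
    ENat.add_le_add_iff_right ENat.one_ne_top, Cardinal.natCast_le_toENat]
end

section
/- Let Λ be an artin algebra and M an indecomposable bristled module (a quotient of a direct sum of length-2 modules). Then the socle of M is homogeneous: all simple submodules of M are isomorphic to each other. -/
open Order

variable (R M : Type*) [Ring R] [AddCommGroup M] [Module R M]

/-- The (composition) length of a module: the length of a longest chain of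
submodules. -/
noncomputable def moduleLength : WithBot ℕ∞ := Order.krullDim (Submodule R M)

/-- A module is bristled if it is generated by modules of length 2;
equivalently, it is the sum of its submodules of length at most 2. -/
def IsBristled : Prop :=
  sSup {N : Submodule R M | moduleLength R N ≤ 2} = ⊤

/-- An indecomposable module: nonzero, with no nontrivial direct decomposition. -/
def ModIndec : Prop :=
  Nontrivial M ∧ ∀ N N' : Submodule R M, IsCompl N N' → N = ⊥ ∨ N' = ⊥

/-!
Let `E` be the isotypic component of `S` and `F` the sum of the other isotypic components, so
that `E` and `F` are disjoint and every simple submodule lies in one of them. Take a pair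
`Y ≥ E`, `Z ≥ F` of disjoint submodules, maximal for inclusion (`M` is noetherian by
Hopkins–Levitzki). If a bristle `B` is not contained in `Y ⊔ Z`, then `B ⊓ (Y ⊔ Z)` is a proper
submodule of `B` containing its simple submodules, so it is simple and lies in `E` or in `F`;
by the modular law, adding `B` to `Y` (resp. `Z`) keeps the pair disjoint, contradicting
maximality. Hence `Y ⊔ Z = ⊤`, and indecomposability kills `Y ⊇ S` or `Z ⊇ T`.
-/

section Lattice

variable {α : Type*}

theorem Disjoint.sup_left_of_inf_sup_le [Lattice α] [OrderBot α] [IsModularLattice α]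
    {y z b : α} (hyz : Disjoint y z) (hb : b ⊓ (y ⊔ z) ≤ y) : Disjoint (y ⊔ b) z := by
  have hinf : (y ⊔ b) ⊓ (y ⊔ z) = y := by
    rw [sup_inf_assoc_of_le b le_sup_left, sup_eq_left.2 hb]
  intro x hx hxz
  exact hyz (hinf ▸ le_inf hx (hxz.trans le_sup_right)) hxz

theorem Disjoint.exists_isCompl_of_sSup_eq_top [CompleteLattice α] [IsModularLattice α]
    [IsAtomic α] [WellFoundedGT α] {e f : α} (hef : Disjoint e f)
    (hatom : ∀ a, IsAtom a → a ≤ e ∨ a ≤ f) {G : Set α} (hG : sSup G = ⊤)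
    (hGatom : ∀ b ∈ G, ∀ a, a ≠ ⊥ → a < b → IsAtom a) :
    ∃ y z, IsCompl y z ∧ e ≤ y ∧ f ≤ z := by
  obtain ⟨⟨y, z⟩, ⟨hey, hfz, hyz⟩, hmax⟩ := wellFounded_gt.has_min
    {p : α × α | e ≤ p.1 ∧ f ≤ p.2 ∧ Disjoint p.1 p.2} ⟨(e, f), le_rfl, le_rfl, hef⟩
  refine ⟨y, z, ⟨hyz, codisjoint_iff.2 (top_unique (hG ▸ sSup_le fun b hb => ?_))⟩, hey, hfz⟩
  by_contra hb'
  have hne : b ⊓ (y ⊔ z) ≠ ⊥ := by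
    obtain ⟨a, ha, hab⟩ :=
      (eq_bot_or_exists_atom_le b).resolve_left (by rintro rfl; exact hb' bot_le)
    have hayz : a ≤ y ⊔ z := (hatom a ha).elim
      (fun h => le_sup_of_le_left (h.trans hey)) (fun h => le_sup_of_le_right (h.trans hfz))
    exact ha.1 ∘ eq_bot_mono (le_inf hab hayz)
  rcases hatom _ (hGatom b hb _ hne (inf_lt_left.2 hb')) with he | hf
  · exact hmax (y ⊔ b, z) ⟨le_sup_of_le_left hey, hfz, hyz.sup_left_of_inf_sup_le (he.trans hey)⟩
      (Prod.mk_lt_mk_iff_left.2 (left_lt_sup.2 fun h => hb' (le_sup_of_le_left h)))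
  · exact hmax (y, z ⊔ b) ⟨hey, le_sup_of_le_left hfz,
      (hyz.symm.sup_left_of_inf_sup_le (sup_comm y z ▸ hf.trans hfz)).symm⟩
      (Prod.mk_lt_mk_iff_right.2 (left_lt_sup.2 fun h => hb' (le_sup_of_le_right h)))

end Lattice

section Module

variable {R M}

theorem isAtom_of_lt_of_moduleLength_le_two {B N : Submodule R M} (hB : moduleLength R B ≤ 2)
    (hN : N ≠ ⊥) (hNB : N < B) : IsAtom N := by
  refine ⟨hN, fun L hLN => by_contra fun hL => ?_⟩
  let e := (Submodule.MapSubtype.orderIso B).symm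
  let chain : LTSeries (Submodule R B) :=
    { length := 3
      toFun := ![e ⟨⊥, bot_le⟩, e ⟨L, (hLN.trans hNB).le⟩, e ⟨N, hNB.le⟩, e ⟨B, le_rfl⟩]
      step := by
        intro i
        fin_cases i
        exacts [e.strictMono (bot_lt_iff_ne_bot.2 hL), e.strictMono hLN, e.strictMono hNB] }
  have h3 := chain.length_le_krullDim.trans hB
  norm_num [chain] at h3

theorem Submodule.le_or_le_sSup_isotypicComponents_diff (m c : Submodule R M)
    [IsSimpleModule R m] : m ≤ c ∨ m ≤ sSup (isotypicComponents R M \ {c}) := by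
  by_cases hc : isotypicComponent R M m = c
  · exact .inl (hc ▸ m.le_isotypicComponent)
  · exact .inr (le_sSup_of_le ⟨⟨m, ‹_›, rfl⟩, hc⟩ m.le_isotypicComponent)

end Module

/-- The socle of an indecomposable bristled module over an artin algebra is
homogeneous: all its simple submodules are isomorphic. -/
theorem socle_homogeneous (R M : Type*) [Ring R] [IsArtinianRing R]
    [AddCommGroup M] [Module R M] [Module.Finite R M]
    (hind : ModIndec R M) (hbr : IsBristled R M) :
    ∀ S T : Submodule R M, IsSimpleModule R S → IsSimpleModule R T →
      Nonempty (S ≃ₗ[R] T) := by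
  intro S T hS hT
  by_contra hST
  set E := isotypicComponent R M S
  set F := sSup (isotypicComponents R M \ {E})
  have hsplit : ∀ A : Submodule R M, IsAtom A → A ≤ E ∨ A ≤ F := fun A hA =>
    have := isSimpleModule_iff_isAtom.2 hA
    A.le_or_le_sSup_isotypicComponents_diff E
  have hTF : T ≤ F := (hsplit T (isSimpleModule_iff_isAtom.1 hT)).resolve_left fun hTE =>
    hST ((isIsotypicOfType_submodule_iff.1 (.isotypicComponent R M S) T hTE).map .symm)
  obtain ⟨Y, Z, hYZ, hEY, hFZ⟩ :=
    (sSupIndep_isotypicComponents R M ⟨S, hS, rfl⟩).exists_isCompl_of_sSup_eq_top hsplit hbr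
      (fun _ hB _ => isAtom_of_lt_of_moduleLength_le_two hB)
  rcases hind.2 Y Z hYZ with rfl | rfl
  · exact (isSimpleModule_iff_isAtom.1 hS).1 (le_bot_iff.1 (S.le_isotypicComponent.trans hEY))
  · exact (isSimpleModule_iff_isAtom.1 hT).1 (le_bot_iff.1 (hTF.trans hFZ))
end

section
/- Let Λ be a hereditary artin algebra and N a class of Λ-modules. Then the class of Λ-modules M that are both generated by N (quotients of direct sums of modules in N) and N-saturated (Ext¹(N, M) = 0 for all N in the class) is closed under quotient modules and under extensions. -/
open Function

universe u

variable (R : Type u) [Ring R]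

/-- A ring is (left) hereditary if every submodule of a projective module is
projective. -/
def IsHereditaryRing : Prop :=
  ∀ (P : ModuleCat.{u} R), Module.Projective R P →
    ∀ S : Submodule R P, Module.Projective R S

/-- `M` is generated by the class `𝒩`: it is a quotient of a finite direct sum
of modules from `𝒩`. -/
def GeneratedByClass (𝒩 : Set (ModuleCat.{u} R)) (M : ModuleCat.{u} R) : Prop :=
  ∃ (ι : Type u) (_ : Fintype ι) (X : ι → ModuleCat.{u} R),
    (∀ i, X i ∈ 𝒩) ∧ ∃ f : (∀ i, X i) →ₗ[R] M, Surjective f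

/-- `M` is `𝒩`-saturated: `Ext¹(N, M) = 0` for all `N ∈ 𝒩`, i.e. every short
exact sequence `0 → M → E → N → 0` splits. -/
def SaturatedFor (𝒩 : Set (ModuleCat.{u} R)) (M : ModuleCat.{u} R) : Prop :=
  ∀ N ∈ 𝒩, ∀ (E : ModuleCat.{u} R) (i : M →ₗ[R] E) (p : E →ₗ[R] N),
    Injective i → Surjective p → LinearMap.range i = LinearMap.ker p →
    ∃ r : E →ₗ[R] M, r.comp i = LinearMap.id

/-!
Saturation of `M` with respect to `𝒩` means that for `N ∈ 𝒩` the functor `Hom(N, -)` is exact on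
short exact sequences starting at `M` (lift through a pullback) and `Hom(-, M)` is exact on short
exact sequences ending at `N` (extend through a pushout).

For an extension `0 → M' → M → M'' → 0`, a generating family of `M''` lifts to `M` because `M'` is
saturated, and together with a generating family of `M'` it generates `M`; saturation of `M` is the
half-exactness of `Ext¹(N, -)`. For a quotient `M → M'`, heredity makes the syzygy `Q` of a free
cover `P → N` projective (this is `Ext²(N, -) = 0`): the map `Q → M'` induced by an extension of
`N` by `M'` lifts to `M`, extends to `P` since `M` is saturated, and the difference yields a
section of the extension.
-/

section ExactSequences

variable {R} {A B M N P W : Type*} [AddCommMonoid A] [Module R A] [AddCommMonoid B] [Module R B]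
  [AddCommGroup M] [Module R M] [AddCommGroup N] [Module R N] [AddCommGroup P] [Module R P]
  [AddCommGroup W] [Module R W]

theorem Function.Exact.exists_comp_eq_of_comp_eq_zero {f : A →ₗ[R] N} {g : N →ₗ[R] P}
    (h : Exact f g) (hg : Surjective g) (k : N →ₗ[R] W) (hk : k ∘ₗ f = 0) :
    ∃ l : P →ₗ[R] W, l ∘ₗ g = k := by
  have hker : LinearMap.ker g ≤ LinearMap.ker k := by
    rw [h.linearMap_ker_eq]
    exact LinearMap.range_le_ker_iff.2 hk
  refine ⟨(LinearMap.ker g).liftQ k hker ∘ₗ (g.quotKerEquivOfSurjective hg).symm.toLinearMap,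
    LinearMap.ext fun x => ?_⟩
  simp

theorem Function.Exact.surjective_coprod {i : M →ₗ[R] N} {p : N →ₗ[R] P} (h : Exact i p)
    {f : A →ₗ[R] M} (hf : Surjective f) {u : B →ₗ[R] N} (hu : Surjective (p ∘ₗ u)) :
    Surjective ((i ∘ₗ f).coprod u) := by
  intro n
  obtain ⟨b, hb⟩ := hu (p n)
  obtain ⟨m, hm⟩ := (h (n - u b)).1 (by simp_all)
  obtain ⟨a, rfl⟩ := hf m
  exact ⟨(a, b), by simp [hm]⟩

theorem Module.Projective.exists_comp_eq_of_range_le [Module.Projective R A] {f : M →ₗ[R] N}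
    {k : A →ₗ[R] N} (h : LinearMap.range k ≤ LinearMap.range f) :
    ∃ l : A →ₗ[R] M, f ∘ₗ l = k := by
  obtain ⟨l, hl⟩ := Module.projective_lifting_property f.rangeRestrict
    (k.codRestrict _ fun x => h ⟨x, rfl⟩) f.surjective_rangeRestrict
  exact ⟨l, LinearMap.ext fun x => congr_arg Subtype.val (LinearMap.congr_fun hl x)⟩

end ExactSequences

namespace SaturatedFor

variable {R} {𝒩 : Set (ModuleCat.{u} R)}

section

variable {M N : ModuleCat.{u} R}

theorem exists_section (hM : SaturatedFor R 𝒩 M) (hN : N ∈ 𝒩) {E : Type u} [AddCommGroup E]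
    [Module R E] {i : M →ₗ[R] E} {p : E →ₗ[R] N} (hi : Injective i) (hp : Surjective p)
    (h : Exact i p) : ∃ s : N →ₗ[R] E, p ∘ₗ s = LinearMap.id :=
  ((h.split_tfae hi hp).out 0 1).2
    (hM N hN (.of R E) i p hi hp h.linearMap_ker_eq.symm)

theorem of_exists_section
    (H : ∀ N ∈ 𝒩, ∀ (E : ModuleCat.{u} R) (i : M →ₗ[R] E) (p : E →ₗ[R] N),
      Injective i → Surjective p → Exact i p → ∃ s : N →ₗ[R] E, p ∘ₗ s = LinearMap.id) :
    SaturatedFor R 𝒩 M := by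
  intro N hN E i p hi hp hip
  have h : Exact i p := LinearMap.exact_iff.2 hip.symm
  exact ((h.split_tfae hi hp).out 0 1).1 (H N hN E i p hi hp h)

variable {E F : Type u} [AddCommGroup E] [Module R E] [AddCommGroup F] [Module R F]

theorem exists_lift (hM : SaturatedFor R 𝒩 M) (hN : N ∈ 𝒩) {i : M →ₗ[R] E} {p : E →ₗ[R] F}
    (hi : Injective i) (hp : Surjective p) (h : Exact i p) (f : N →ₗ[R] F) :
    ∃ g : N →ₗ[R] E, p ∘ₗ g = f := by
  let K := LinearMap.eqLocus (p ∘ₗ LinearMap.fst R E N) (f ∘ₗ LinearMap.snd R E N)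
  let ι : M →ₗ[R] K := (LinearMap.inl R E N ∘ₗ i).codRestrict K fun m => by
    simp [K, h.apply_apply_eq_zero]
  let π : K →ₗ[R] N := LinearMap.snd R E N ∘ₗ K.subtype
  have hι : Injective ι := fun a b hab => hi (congr_arg (fun x : K => x.1.1) hab)
  have hπ : Surjective π := fun n => by
    obtain ⟨e, he⟩ := hp (f n)
    exact ⟨⟨(e, n), by simpa [K] using he⟩, rfl⟩
  have hιπ : Exact ι π := LinearMap.exact_of_comp_of_mem_range (by ext; rfl) <| by
    rintro ⟨⟨e, n⟩, hen⟩ (rfl : n = 0)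
    obtain ⟨m, rfl⟩ := (h e).1 (by simpa [K] using hen)
    exact ⟨m, rfl⟩
  obtain ⟨s, hs⟩ := hM.exists_section hN hι hπ hιπ
  refine ⟨LinearMap.fst R E N ∘ₗ K.subtype ∘ₗ s, LinearMap.ext fun n => ?_⟩
  have hsn : ((s n : K) : E × N).2 = n := LinearMap.congr_fun hs n
  have hmem : p ((s n : K) : E × N).1 = f ((s n : K) : E × N).2 := (s n).2
  simpa [hsn] using hmem

theorem exists_lift_pi (hM : SaturatedFor R 𝒩 M) {ι : Type*} [Fintype ι]
    {X : ι → ModuleCat.{u} R} (hX : ∀ j, X j ∈ 𝒩) {i : M →ₗ[R] E} {p : E →ₗ[R] F}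
    (hi : Injective i) (hp : Surjective p) (h : Exact i p) (f : (∀ j, X j) →ₗ[R] F) :
    ∃ g : (∀ j, X j) →ₗ[R] E, p ∘ₗ g = f := by
  classical
  choose g hg using fun j =>
    hM.exists_lift (hX j) hi hp h (f ∘ₗ LinearMap.single R (fun j => X j) j)
  refine ⟨∑ j, g j ∘ₗ LinearMap.proj j, LinearMap.pi_ext fun j x => ?_⟩
  simpa [LinearMap.apply_single, Fintype.sum_pi_single'] using LinearMap.congr_fun (hg j) x

theorem exists_extend {B : ModuleCat.{u} R} (hB : SaturatedFor R 𝒩 B) (hN : N ∈ 𝒩)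
    {A : Type*} [AddCommMonoid A] [Module R A] {j : A →ₗ[R] E} {q : E →ₗ[R] N}
    (hj : Injective j) (hq : Surjective q) (h : Exact j q) (g : A →ₗ[R] B) :
    ∃ k : E →ₗ[R] B, k ∘ₗ j = g := by
  let T := LinearMap.range (g.prod (-j))
  have hT : T ≤ LinearMap.ker (q ∘ₗ LinearMap.snd R B E) := by
    rintro _ ⟨a, rfl⟩
    simp [h.apply_apply_eq_zero]
  let ι : B →ₗ[R] (B × E) ⧸ T := T.mkQ ∘ₗ LinearMap.inl R B E
  let π : (B × E) ⧸ T →ₗ[R] N := T.liftQ _ hT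
  have hι : Injective ι := by
    refine (injective_iff_map_eq_zero ι).2 fun b hb => ?_
    obtain ⟨a, ha⟩ := (Submodule.Quotient.mk_eq_zero T).1 hb
    obtain ⟨rfl, hja⟩ : g a = b ∧ j a = 0 := by simpa [Prod.ext_iff] using ha
    rw [hj (hja.trans (map_zero j).symm), map_zero]
  have hπ : Surjective π := fun n => by
    obtain ⟨e, rfl⟩ := hq n
    exact ⟨T.mkQ (0, e), by simp [π]⟩
  have hιπ : Exact ι π := LinearMap.exact_of_comp_of_mem_range (by ext; simp [ι, π]) fun x hx => by
    obtain ⟨⟨b, e⟩, rfl⟩ := T.mkQ_surjective x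
    obtain ⟨a, rfl⟩ := (h e).1 (by simpa [π] using hx)
    exact ⟨b + g a, (Submodule.Quotient.eq T).2 ⟨a, by simp⟩⟩
  obtain ⟨r, hr⟩ := hB N hN (.of R ((B × E) ⧸ T)) ι π hι hπ hιπ.linearMap_ker_eq.symm
  refine ⟨r ∘ₗ T.mkQ ∘ₗ LinearMap.inr R B E, LinearMap.ext fun a => ?_⟩
  have hja : ι (g a) = T.mkQ (0, j a) := (Submodule.Quotient.eq T).2 ⟨a, by simp⟩
  simpa [← hja] using LinearMap.congr_fun hr (g a)

end

theorem of_surjective (hher : IsHereditaryRing R) {M M' : ModuleCat.{u} R}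
    (hM : SaturatedFor R 𝒩 M) (g : M →ₗ[R] M') (hg : Surjective g) : SaturatedFor R 𝒩 M' := by
  refine of_exists_section fun N hN E i p hi hp h => ?_
  let ε := Finsupp.linearCombination R (id : N → N)
  have hε : Surjective ε := Finsupp.linearCombination_id_surjective R N
  have hεQ : Exact (LinearMap.ker ε).subtype ε := LinearMap.exact_subtype_ker_map ε
  have : Module.Projective R (LinearMap.ker ε) := hher (.of R (N →₀ R)) inferInstance _
  obtain ⟨φ, hφ⟩ := Module.projective_lifting_property p ε hp
  obtain ⟨k, hk⟩ : ∃ k : LinearMap.ker ε →ₗ[R] M,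
      (i ∘ₗ g) ∘ₗ k = φ ∘ₗ (LinearMap.ker ε).subtype := by
    refine Module.Projective.exists_comp_eq_of_range_le ?_
    rw [LinearMap.range_comp_of_range_eq_top _ (LinearMap.range_eq_top.2 hg),
      ← h.linearMap_ker_eq]
    rintro _ ⟨x, rfl⟩
    simp [← LinearMap.comp_apply p φ, hφ]
  obtain ⟨k', hk'⟩ := hM.exists_extend hN (LinearMap.ker ε).injective_subtype hε hεQ k
  obtain ⟨s, hs⟩ := hεQ.exists_comp_eq_of_comp_eq_zero hε (φ - i ∘ₗ g ∘ₗ k') <| by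
    rw [LinearMap.sub_comp, LinearMap.comp_assoc, LinearMap.comp_assoc, hk', ← hk]
    exact sub_self _
  refine ⟨s, (LinearMap.cancel_right hε).1 ?_⟩
  rw [LinearMap.comp_assoc, hs, LinearMap.comp_sub, hφ, ← LinearMap.comp_assoc,
    h.linearMap_comp_eq_zero, LinearMap.zero_comp, sub_zero, LinearMap.id_comp]

theorem of_extension {M' M M'' : ModuleCat.{u} R} (hM' : SaturatedFor R 𝒩 M')
    (hM'' : SaturatedFor R 𝒩 M'') {i : M' →ₗ[R] M} {p : M →ₗ[R] M''} (hi : Injective i)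
    (hp : Surjective p) (h : Exact i p) : SaturatedFor R 𝒩 M := by
  refine of_exists_section fun N hN E j q hj hq hjq => ?_
  obtain ⟨k, hk⟩ := hM''.exists_extend hN hj hq hjq p
  have hkj : ∀ m, k (j m) = p m := LinearMap.congr_fun hk
  let K := LinearMap.ker k
  let ι : M' →ₗ[R] K := (j ∘ₗ i).codRestrict K fun m => by
    simp [K, hkj, h.apply_apply_eq_zero]
  let π : K →ₗ[R] N := q ∘ₗ K.subtype
  have hι : Injective ι := fun a b hab => hi (hj (congr_arg Subtype.val hab))
  have hπ : Surjective π := fun n => by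
    obtain ⟨e, rfl⟩ := hq n
    obtain ⟨m, hm⟩ := hp (k e)
    exact ⟨⟨e - j m, by simp [K, hkj, hm]⟩, by simp [π, hjq.apply_apply_eq_zero]⟩
  have hιπ : Exact ι π := LinearMap.exact_of_comp_of_mem_range
      (by ext; simp [ι, π, hjq.apply_apply_eq_zero]) <| by
    rintro ⟨e, he⟩ hqe
    obtain ⟨m, rfl⟩ := (hjq e).1 hqe
    obtain ⟨m', rfl⟩ := (h m).1 (by simpa [K, hkj] using he)
    exact ⟨m', rfl⟩
  obtain ⟨s, hs⟩ := hM'.exists_section hN hι hπ hιπ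
  exact ⟨K.subtype ∘ₗ s, hs⟩

end SaturatedFor

namespace GeneratedByClass

variable {R} {𝒩 : Set (ModuleCat.{u} R)}

theorem of_surjective {M M' : ModuleCat.{u} R} (hM : GeneratedByClass R 𝒩 M)
    (g : M →ₗ[R] M') (hg : Surjective g) : GeneratedByClass R 𝒩 M' := by
  obtain ⟨ι, hι, X, hX, f, hf⟩ := hM
  exact ⟨ι, hι, X, hX, g ∘ₗ f, hg.comp hf⟩

theorem of_extension {M' M M'' : ModuleCat.{u} R} (hM' : GeneratedByClass R 𝒩 M')
    (hsat : SaturatedFor R 𝒩 M') (hM'' : GeneratedByClass R 𝒩 M'') {i : M' →ₗ[R] M}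
    {p : M →ₗ[R] M''} (hi : Injective i) (hp : Surjective p) (h : Exact i p) :
    GeneratedByClass R 𝒩 M := by
  obtain ⟨ι', _, X', hX', f', hf'⟩ := hM'
  obtain ⟨ι'', _, X'', hX'', f'', hf''⟩ := hM''
  obtain ⟨u, hu⟩ := hsat.exists_lift_pi hX'' hi hp h f''
  refine ⟨ι' ⊕ ι'', inferInstance, Sum.elim X' X'', Sum.forall.2 ⟨hX', hX''⟩,
    (i ∘ₗ f').coprod u ∘ₗ (LinearEquiv.sumPiEquivProdPi R ι' ι'' _).toLinearMap, ?_⟩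
  exact (h.surjective_coprod hf' (hu ▸ hf'')).comp (LinearEquiv.surjective _)

end GeneratedByClass

theorem generated_and_saturated_closed_general (R : Type u) [Ring R]
    (hher : IsHereditaryRing R) (𝒩 : Set (ModuleCat.{u} R)) :
    -- closed under quotients
    (∀ (M M' : ModuleCat.{u} R),
      GeneratedByClass R 𝒩 M → SaturatedFor R 𝒩 M →
      ∀ g : M →ₗ[R] M', Surjective g →
        GeneratedByClass R 𝒩 M' ∧ SaturatedFor R 𝒩 M') ∧
    -- closed under extensions
    (∀ (M' M M'' : ModuleCat.{u} R),
      GeneratedByClass R 𝒩 M' → SaturatedFor R 𝒩 M' →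
      GeneratedByClass R 𝒩 M'' → SaturatedFor R 𝒩 M'' →
      ∀ (i : M' →ₗ[R] M) (p : M →ₗ[R] M''),
        Injective i → Surjective p → LinearMap.range i = LinearMap.ker p →
        GeneratedByClass R 𝒩 M ∧ SaturatedFor R 𝒩 M) := by
  refine ⟨fun M M' hgen hsat g hg => ⟨hgen.of_surjective g hg, hsat.of_surjective hher g hg⟩,
    fun M' M M'' hgen' hsat' hgen'' hsat'' i p hi hp hip => ?_⟩
  have h : Exact i p := LinearMap.exact_iff.2 hip.symm
  exact ⟨hgen'.of_extension hsat' hgen'' hi hp h, hsat'.of_extension hsat'' hi hp h⟩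

/-- Over a hereditary artin algebra, the class of modules which are both
generated by `𝒩` and `𝒩`-saturated is closed under quotient modules and under
extensions. -/
theorem generated_and_saturated_closed (R : Type u) [Ring R] [IsArtinianRing R]
    (hher : IsHereditaryRing R) (𝒩 : Set (ModuleCat.{u} R)) :
    -- closed under quotients
    (∀ (M M' : ModuleCat.{u} R),
      GeneratedByClass R 𝒩 M → SaturatedFor R 𝒩 M →
      ∀ g : M →ₗ[R] M', Surjective g →
        GeneratedByClass R 𝒩 M' ∧ SaturatedFor R 𝒩 M') ∧
    -- closed under extensions
    (∀ (M' M M'' : ModuleCat.{u} R),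
      GeneratedByClass R 𝒩 M' → SaturatedFor R 𝒩 M' →
      GeneratedByClass R 𝒩 M'' → SaturatedFor R 𝒩 M'' →
      ∀ (i : M' →ₗ[R] M) (p : M →ₗ[R] M''),
        Injective i → Surjective p → LinearMap.range i = LinearMap.ker p →
        GeneratedByClass R 𝒩 M ∧ SaturatedFor R 𝒩 M) :=
  generated_and_saturated_closed_general R hher 𝒩
end

section
/- Let k be a field and n ≥ 3. There exist two indecomposable n-Kronecker modules over k with the same dimension vector (3,2), one of which is generated by its submodules of length 2 and one of which is not. -/
variable (k : Type*) [Field k]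

/-- Indecomposability of a representation of the `n`-Kronecker quiver. -/
def KronIndec (n : ℕ) (M1 M2 : Type*) [AddCommGroup M1] [Module k M1]
    [AddCommGroup M2] [Module k M2] (α : Fin n → M1 →ₗ[k] M2) : Prop :=
  (Nontrivial M1 ∨ Nontrivial M2) ∧
    ∀ (U1 W1 : Submodule k M1) (U2 W2 : Submodule k M2),
      (∀ i, U1.map (α i) ≤ U2) → (∀ i, W1.map (α i) ≤ W2) →
      IsCompl U1 W1 → IsCompl U2 W2 →
      (U1 = ⊥ ∧ U2 = ⊥) ∨ (W1 = ⊥ ∧ W2 = ⊥)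

/-- A Kronecker module is bristled (generated by its submodules of length at
most 2) iff its degree-1 part is spanned by the elements `u` whose images
`α₁ u, …, α_n u` span a subspace of dimension at most 1. -/
def KronBristled (n : ℕ) (M1 M2 : Type*) [AddCommGroup M1] [Module k M1]
    [AddCommGroup M2] [Module k M2] (α : Fin n → M1 →ₗ[k] M2) : Prop :=
  Submodule.span k {u : M1 | ∃ w : M2, ∀ i, ∃ c : k, α i u = c • w} = ⊤

/-! ### Auxiliary definitions: the two modules -/

/-- The "bristle" map `u ↦ u j • v`. -/
def brMap (j : Fin 3) (v : Fin 2 → k) : (Fin 3 → k) →ₗ[k] (Fin 2 → k) :=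
  (LinearMap.proj j).smulRight v

@[simp] lemma brMap_apply (j : Fin 3) (v : Fin 2 → k) (u : Fin 3 → k) :
    brMap k j v u = u j • v := rfl

/-- The zigzag module: `α₁ a₁ = b₁`, `α₂ a₂ = b₁ + b₂`, `α₃ a₃ = b₂`. -/
def Amod (n : ℕ) : Fin n → ((Fin 3 → k) →ₗ[k] (Fin 2 → k)) := fun i =>
  if i.val = 0 then brMap k 0 ![1,0]
  else if i.val = 1 then brMap k 1 ![1,1]
  else if i.val = 2 then brMap k 2 ![0,1] else 0

/-- The non-bristled module: `β₁ a₁ = b₁`, `β₁ a₃ = b₂`, `β₂ a₂ = b₁`,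
`β₃ a₂ = b₂`. -/
def Bmod (n : ℕ) : Fin n → ((Fin 3 → k) →ₗ[k] (Fin 2 → k)) := fun i =>
  if i.val = 0 then brMap k 0 ![1,0] + brMap k 2 ![0,1]
  else if i.val = 1 then brMap k 1 ![1,0]
  else if i.val = 2 then brMap k 1 ![0,1] else 0

/-! ### Auxiliary lemmas on projections -/

lemma proj_spec {M : Type*} [AddCommGroup M] [Module k M] {U W : Submodule k M}
    (h : IsCompl U W) :
    ∃ p : M →ₗ[k] M, (∀ x, p x ∈ U) ∧ (∀ x ∈ U, p x = x) ∧ (∀ x ∈ W, p x = 0) ∧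
      (∀ x, x - p x ∈ W) := by
  refine ⟨U.subtype ∘ₗ U.projectionOnto W h, fun x => (U.projectionOnto W h x).2,
    fun x hx => congrArg Subtype.val (Submodule.projectionOnto_apply_left h ⟨x, hx⟩),
    fun x hx => by simp [(Submodule.projectionOnto_apply_eq_zero_iff h).mpr hx],
    fun x => ?_⟩
  have h2 := Submodule.projection_add_projection_eq_self h x
  have h3 : x - (U.projectionOnto W h x : M) = (W.projectionOnto U h.symm x : M) :=
    sub_eq_iff_eq_add'.mpr h2.symm
  show x - (U.projectionOnto W h x : M) ∈ W
  rw [h3]; exact (W.projectionOnto U h.symm x).2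

lemma key {n : ℕ} (α : Fin n → ((Fin 3 → k) →ₗ[k] (Fin 2 → k)))
    (U1 W1 : Submodule k (Fin 3 → k)) (U2 W2 : Submodule k (Fin 2 → k))
    (hU : ∀ i, U1.map (α i) ≤ U2) (hW : ∀ i, W1.map (α i) ≤ W2)
    (h1 : IsCompl U1 W1) (h2 : IsCompl U2 W2) :
    ∃ (p : (Fin 2 → k) →ₗ[k] (Fin 2 → k)) (q : (Fin 3 → k) →ₗ[k] (Fin 3 → k)),
      (∀ i x, p (α i x) = α i (q x)) ∧
      (∀ x, p x ∈ U2) ∧ (∀ x ∈ U2, p x = x) ∧ (∀ x ∈ W2, p x = 0) ∧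
      (∀ x ∈ U1, q x = x) ∧ (∀ x ∈ W1, q x = 0) := by
  obtain ⟨p, hpU, hpfix, hpkill, hpW⟩ := proj_spec k h2
  obtain ⟨q, hqU, hqfix, hqkill, hqW⟩ := proj_spec k h1
  refine ⟨p, q, fun i x => ?_, hpU, hpfix, hpkill, hqfix, hqkill⟩
  have hU2 : p (α i x) - α i (q x) ∈ U2 :=
    sub_mem (hpU _) (hU i ⟨q x, hqU x, rfl⟩)
  have hW2 : p (α i x) - α i (q x) ∈ W2 := by
    have e1 : α i x - p (α i x) ∈ W2 := hpW _
    have e2 : α i x - α i (q x) ∈ W2 := by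
      have := hW i ⟨x - q x, hqW x, rfl⟩
      simpa [map_sub] using this
    have e3 : p (α i x) - α i (q x) = (α i x - α i (q x)) - (α i x - p (α i x)) := by abel
    rw [e3]; exact sub_mem e2 e1
  have := h2.inf_eq_bot ▸ Submodule.mem_inf.mpr ⟨hU2, hW2⟩
  rw [Submodule.mem_bot] at this
  exact sub_eq_zero.mp this

lemma pointwise {m : ℕ} (f : (Fin m → k) →ₗ[k] (Fin m → k)) (c : k)
    (h : ∀ j, f (Pi.single j 1 : Fin m → k) = c • (Pi.single j 1 : Fin m → k)) :
    ∀ x, f x = c • x := by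
  intro x
  have hx : ∑ j, x j • (Pi.single j 1 : Fin m → k) = x := by
    funext t
    simp [Finset.sum_apply, Pi.single_apply]
  calc f x = f (∑ j, x j • (Pi.single j 1 : Fin m → k)) := by rw [hx]
    _ = ∑ j, x j • f (Pi.single j 1 : Fin m → k) := by rw [map_sum]; simp
    _ = c • ∑ j, x j • (Pi.single j 1 : Fin m → k) := by
        rw [Finset.smul_sum]; exact Finset.sum_congr rfl fun j _ => by rw [h j, smul_comm]
    _ = c • x := by rw [hx]

lemma finish_indec
    (U1 W1 : Submodule k (Fin 3 → k)) (U2 W2 : Submodule k (Fin 2 → k))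
    (p : (Fin 2 → k) →ₗ[k] (Fin 2 → k)) (q : (Fin 3 → k) →ₗ[k] (Fin 3 → k))
    (hpfix : ∀ x ∈ U2, p x = x) (hpkill : ∀ x ∈ W2, p x = 0)
    (hqfix : ∀ x ∈ U1, q x = x) (hqkill : ∀ x ∈ W1, q x = 0)
    (c : k) (hc : c * c = c) (hp : ∀ x, p x = c • x) (hq : ∀ x, q x = c • x) :
    (U1 = ⊥ ∧ U2 = ⊥) ∨ (W1 = ⊥ ∧ W2 = ⊥) := by
  have hc01 : c = 0 ∨ c = 1 := by
    rcases mul_eq_zero.mp (show c * (c - 1) = 0 by ring_nf; linear_combination hc) with h | h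
    · exact Or.inl h
    · exact Or.inr (sub_eq_zero.mp h)
  rcases hc01 with rfl | rfl
  · left
    constructor
    · rw [Submodule.eq_bot_iff]; intro x hx
      have := hqfix x hx; rw [hq x, zero_smul] at this; exact this.symm
    · rw [Submodule.eq_bot_iff]; intro x hx
      have := hpfix x hx; rw [hp x, zero_smul] at this; exact this.symm
  · right
    constructor
    · rw [Submodule.eq_bot_iff]; intro x hx
      have := hqkill x hx; rw [hq x, one_smul] at this; exact this
    · rw [Submodule.eq_bot_iff]; intro x hx
      have := hpkill x hx; rw [hp x, one_smul] at this; exact this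

lemma single_eq_vec2 : ∀ j : Fin 2, (Pi.single j 1 : Fin 2 → k)
    = ![![1,0], ![0,1]] j := by
  intro j; funext t; fin_cases j <;> fin_cases t <;>
    simp [Pi.single_apply, Matrix.vecHead, Matrix.vecTail]

lemma single_eq_vec3 : ∀ j : Fin 3, (Pi.single j 1 : Fin 3 → k)
    = ![![1,0,0], ![0,1,0], ![0,0,1]] j := by
  intro j; funext t; fin_cases j <;> fin_cases t <;>
    simp [Pi.single_apply, Matrix.vecHead, Matrix.vecTail]

lemma smul_vec2 (a x y : k) : a • (![x,y] : Fin 2 → k) = ![a*x, a*y] := by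
  funext t; fin_cases t <;> simp

lemma smul_vec3 (a x y z : k) : a • (![x,y,z] : Fin 3 → k) = ![a*x, a*y, a*z] := by
  funext t; fin_cases t <;> simp

/-! ### Indecomposability of the zigzag module -/

lemma Aindec (n : ℕ) (hn : 3 ≤ n) :
    KronIndec k n (Fin 3 → k) (Fin 2 → k) (Amod k n) := by
  refine ⟨Or.inl inferInstance, ?_⟩
  intro U1 W1 U2 W2 hU hW h1 h2
  obtain ⟨p, q, hint, hpU, hpfix, hpkill, hqfix, hqkill⟩ :=
    key k (Amod k n) U1 W1 U2 W2 hU hW h1 h2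
  have hA0 : ∀ x : Fin 3 → k, Amod k n ⟨0, by omega⟩ x = x 0 • ![(1:k),0] :=
    fun x => by simp [Amod]
  have hA1 : ∀ x : Fin 3 → k, Amod k n ⟨1, by omega⟩ x = x 1 • ![(1:k),1] :=
    fun x => by simp [Amod]
  have hA2 : ∀ x : Fin 3 → k, Amod k n ⟨2, by omega⟩ x = x 2 • ![(0:k),1] :=
    fun x => by simp [Amod]
  have E00 := hint ⟨0, by omega⟩ ![1,0,0]
  have E01 := hint ⟨0, by omega⟩ ![0,1,0]
  have E02 := hint ⟨0, by omega⟩ ![0,0,1]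
  have E10 := hint ⟨1, by omega⟩ ![1,0,0]
  have E11 := hint ⟨1, by omega⟩ ![0,1,0]
  have E12 := hint ⟨1, by omega⟩ ![0,0,1]
  have E20 := hint ⟨2, by omega⟩ ![1,0,0]
  have E21 := hint ⟨2, by omega⟩ ![0,1,0]
  have E22 := hint ⟨2, by omega⟩ ![0,0,1]
  rw [hA0, hA0] at E00 E01 E02
  rw [hA1, hA1] at E10 E11 E12
  rw [hA2, hA2] at E20 E21 E22
  norm_num [Matrix.cons_val_two, show p ![0,0] = 0 from by rw [show (![0,0] : Fin 2 → k) = 0 from by funext i; fin_cases i <;> rfl, map_zero]] at E00 E01 E02 E10 E11 E12 E20 E21 E22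
  set c := q ![0,1,0] 1 with hcdef
  have z10 : q ![1,0,0] 1 = 0 := by simpa using (congrFun E10 0).symm
  have z20 : q ![1,0,0] 2 = 0 := by simpa using (congrFun E20 1).symm
  have z01 : q ![0,1,0] 0 = 0 := by simpa using (congrFun E01 0).symm
  have z21 : q ![0,1,0] 2 = 0 := by simpa using (congrFun E21 1).symm
  have z02 : q ![0,0,1] 0 = 0 := by simpa using (congrFun E02 0).symm
  have z12 : q ![0,0,1] 1 = 0 := by simpa using (congrFun E12 0).symm
  have hsplit : (![1,1] : Fin 2 → k) = ![1,0] + ![0,1] := by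
    funext t; fin_cases t <;> simp
  have hadd : p ![1,1] = p ![1,0] + p ![0,1] := by rw [hsplit, map_add]
  have hcomb : (![c,c] : Fin 2 → k) = ![q ![1,0,0] 0, 0] + ![0, q ![0,0,1] 2] := by
    rw [← E00, ← E22, ← hadd, E11]
  have da : q ![1,0,0] 0 = c := by simpa using (congrFun hcomb 0).symm
  have db : q ![0,0,1] 2 = c := by simpa using (congrFun hcomb 1).symm
  have hp0 : p ![1,0] = c • ![1,0] := by
    rw [E00, da, smul_vec2]; funext t; fin_cases t <;> simp
  have hp1 : p ![0,1] = c • ![0,1] := by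
    rw [E22, db, smul_vec2]; funext t; fin_cases t <;> simp
  have hc : c * c = c := by
    have h := hpfix (p ![1,0]) (hpU ![1,0])
    rw [hp0, map_smul, hp0, smul_smul] at h
    have h' := congrFun h 0
    rw [smul_vec2, smul_vec2] at h'
    simpa using h'
  have hp : ∀ x, p x = c • x := by
    refine pointwise k p c fun j => ?_
    rw [single_eq_vec2 k j]
    fin_cases j
    · simpa using hp0
    · simpa using hp1
  have hq : ∀ x, q x = c • x := by
    refine pointwise k q c fun j => ?_
    rw [single_eq_vec3 k j]
    fin_cases j
    · show q ![1,0,0] = c • ![1,0,0]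
      rw [smul_vec3]; funext t; fin_cases t <;> simp [da, z10, z20]
    · show q ![0,1,0] = c • ![0,1,0]
      rw [smul_vec3]; funext t; fin_cases t <;> simp [← hcdef, z01, z21]
    · show q ![0,0,1] = c • ![0,0,1]
      rw [smul_vec3]; funext t; fin_cases t <;> simp [db, z02, z12]
  exact finish_indec k U1 W1 U2 W2 p q hpfix hpkill hqfix hqkill c hc hp hq

/-! ### Indecomposability of the second module -/

lemma Bindec (n : ℕ) (hn : 3 ≤ n) :
    KronIndec k n (Fin 3 → k) (Fin 2 → k) (Bmod k n) := by
  refine ⟨Or.inl inferInstance, ?_⟩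
  intro U1 W1 U2 W2 hU hW h1 h2
  obtain ⟨p, q, hint, hpU, hpfix, hpkill, hqfix, hqkill⟩ :=
    key k (Bmod k n) U1 W1 U2 W2 hU hW h1 h2
  have hB0 : ∀ x : Fin 3 → k, Bmod k n ⟨0, by omega⟩ x
      = x 0 • ![(1:k),0] + x 2 • ![(0:k),1] := fun x => by simp [Bmod]
  have hB1 : ∀ x : Fin 3 → k, Bmod k n ⟨1, by omega⟩ x = x 1 • ![(1:k),0] :=
    fun x => by simp [Bmod]
  have hB2 : ∀ x : Fin 3 → k, Bmod k n ⟨2, by omega⟩ x = x 1 • ![(0:k),1] :=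
    fun x => by simp [Bmod]
  have F00 := hint ⟨0, by omega⟩ ![1,0,0]
  have F01 := hint ⟨0, by omega⟩ ![0,1,0]
  have F02 := hint ⟨0, by omega⟩ ![0,0,1]
  have F10 := hint ⟨1, by omega⟩ ![1,0,0]
  have F11 := hint ⟨1, by omega⟩ ![0,1,0]
  have F12 := hint ⟨1, by omega⟩ ![0,0,1]
  have F21 := hint ⟨2, by omega⟩ ![0,1,0]
  rw [hB0, hB0] at F00 F01 F02
  rw [hB1, hB1] at F10 F11 F12
  rw [hB2, hB2] at F21
  norm_num [Matrix.cons_val_two, show p ![0,0] = 0 from by rw [show (![0,0] : Fin 2 → k) = 0 from by funext i; fin_cases i <;> rfl, map_zero]] at F00 F01 F02 F10 F11 F12 F21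
  set c := q ![0,1,0] 1 with hcdef
  have z01 : q ![0,1,0] 0 = 0 := by simpa using (congrFun F01 0).symm
  have z21 : q ![0,1,0] 2 = 0 := by simpa using (congrFun F01 1).symm
  have z10 : q ![1,0,0] 1 = 0 := by simpa using (congrFun F10 0).symm
  have z12 : q ![0,0,1] 1 = 0 := by simpa using (congrFun F12 0).symm
  have h00 := F00.symm.trans F11
  have da : q ![1,0,0] 0 = c := by simpa using congrFun h00 0
  have z20 : q ![1,0,0] 2 = 0 := by simpa using congrFun h00 1
  have h02 := F02.symm.trans F21
  have z02 : q ![0,0,1] 0 = 0 := by simpa using congrFun h02 0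
  have db : q ![0,0,1] 2 = c := by simpa using congrFun h02 1
  have hp0 : p ![1,0] = c • ![1,0] := by
    rw [F11, smul_vec2]; funext t; fin_cases t <;> simp
  have hp1 : p ![0,1] = c • ![0,1] := by
    rw [F21, smul_vec2]; funext t; fin_cases t <;> simp
  have hc : c * c = c := by
    have h := hpfix (p ![1,0]) (hpU ![1,0])
    rw [hp0, map_smul, hp0, smul_smul] at h
    have h' := congrFun h 0
    rw [smul_vec2, smul_vec2] at h'
    simpa using h'
  have hp : ∀ x, p x = c • x := by
    refine pointwise k p c fun j => ?_
    rw [single_eq_vec2 k j]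
    fin_cases j
    · simpa using hp0
    · simpa using hp1
  have hq : ∀ x, q x = c • x := by
    refine pointwise k q c fun j => ?_
    rw [single_eq_vec3 k j]
    fin_cases j
    · show q ![1,0,0] = c • ![1,0,0]
      rw [smul_vec3]; funext t; fin_cases t <;> simp [da, z10, z20]
    · show q ![0,1,0] = c • ![0,1,0]
      rw [smul_vec3]; funext t; fin_cases t <;> simp [← hcdef, z01, z21]
    · show q ![0,0,1] = c • ![0,0,1]
      rw [smul_vec3]; funext t; fin_cases t <;> simp [db, z02, z12]
  exact finish_indec k U1 W1 U2 W2 p q hpfix hpkill hqfix hqkill c hc hp hq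

/-! ### The zigzag module is bristled -/

lemma Abristled (n : ℕ) (hn : 3 ≤ n) :
    KronBristled k n (Fin 3 → k) (Fin 2 → k) (Amod k n) := by
  unfold KronBristled
  rw [eq_top_iff]
  rintro x -
  have h0 : (![1,0,0] : Fin 3 → k)
      ∈ {u : Fin 3 → k | ∃ w : Fin 2 → k, ∀ i, ∃ c : k, Amod k n i u = c • w} := by
    refine ⟨![1,0], fun i => ?_⟩
    rcases i with ⟨iv, hi⟩
    match iv with
    | 0 => exact ⟨1, by simp [Amod]⟩
    | 1 => exact ⟨0, by simp [Amod]⟩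
    | 2 => exact ⟨0, by simp [Amod]⟩
    | (m+3) =>
      refine ⟨0, ?_⟩
      simp only [Amod]
      rw [if_neg (by omega), if_neg (by omega), if_neg (by omega)]
      simp
  have h1 : (![0,1,0] : Fin 3 → k)
      ∈ {u : Fin 3 → k | ∃ w : Fin 2 → k, ∀ i, ∃ c : k, Amod k n i u = c • w} := by
    refine ⟨![1,1], fun i => ?_⟩
    rcases i with ⟨iv, hi⟩
    match iv with
    | 0 => exact ⟨0, by simp [Amod]⟩
    | 1 => exact ⟨1, by simp [Amod]⟩
    | 2 => exact ⟨0, by simp [Amod]⟩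
    | (m+3) =>
      refine ⟨0, ?_⟩
      simp only [Amod]
      rw [if_neg (by omega), if_neg (by omega), if_neg (by omega)]
      simp
  have h2 : (![0,0,1] : Fin 3 → k)
      ∈ {u : Fin 3 → k | ∃ w : Fin 2 → k, ∀ i, ∃ c : k, Amod k n i u = c • w} := by
    refine ⟨![0,1], fun i => ?_⟩
    rcases i with ⟨iv, hi⟩
    match iv with
    | 0 => exact ⟨0, by simp [Amod]⟩
    | 1 => exact ⟨0, by simp [Amod]⟩
    | 2 => exact ⟨1, by simp [Amod]⟩
    | (m+3) =>
      refine ⟨0, ?_⟩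
      simp only [Amod]
      rw [if_neg (by omega), if_neg (by omega), if_neg (by omega)]
      simp
  have hx : x = x 0 • ![1,0,0] + x 1 • ![0,1,0] + x 2 • ![0,0,1] := by
    funext t; fin_cases t <;> simp
  rw [hx]
  exact Submodule.add_mem _
    (Submodule.add_mem _
      (Submodule.smul_mem _ _ (Submodule.subset_span h0))
      (Submodule.smul_mem _ _ (Submodule.subset_span h1)))
    (Submodule.smul_mem _ _ (Submodule.subset_span h2))

/-! ### The second module is not bristled -/

lemma Bnotbristled (n : ℕ) (hn : 3 ≤ n) :
    ¬ KronBristled k n (Fin 3 → k) (Fin 2 → k) (Bmod k n) := by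
  unfold KronBristled
  intro h
  have hle : Submodule.span k
      {u : Fin 3 → k | ∃ w : Fin 2 → k, ∀ i, ∃ c : k, Bmod k n i u = c • w}
      ≤ LinearMap.ker (LinearMap.proj 1 : (Fin 3 → k) →ₗ[k] k) := by
    rw [Submodule.span_le]
    rintro u ⟨w, hw⟩
    obtain ⟨c1, h1⟩ := hw ⟨1, by omega⟩
    obtain ⟨c2, h2⟩ := hw ⟨2, by omega⟩
    have e1 : u 1 • ![(1:k),0] = c1 • w := by rw [← h1]; simp [Bmod]
    have e2 : u 1 • ![(0:k),1] = c2 • w := by rw [← h2]; simp [Bmod]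
    have a10 : u 1 = c1 * w 0 := by simpa [smul_vec2] using congrFun e1 0
    have a20 : 0 = c2 * w 0 := by simpa [smul_vec2] using congrFun e2 0
    have a21 : u 1 = c2 * w 1 := by simpa [smul_vec2] using congrFun e2 1
    have hu : u 1 = 0 := by
      rcases eq_or_ne (w 0) 0 with hw0 | hw0
      · rw [a10, hw0, mul_zero]
      · have hc2 : c2 = 0 := by
          rcases mul_eq_zero.mp a20.symm with h' | h'
          · exact h'
          · exact absurd h' hw0
        rw [a21, hc2, zero_mul]
    simpa [LinearMap.mem_ker] using hu
  have hmem : (![0,1,0] : Fin 3 → k) ∈ Submodule.span k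
      {u : Fin 3 → k | ∃ w : Fin 2 → k, ∀ i, ∃ c : k, Bmod k n i u = c • w} := by
    rw [h]; exact Submodule.mem_top
  have hbad := hle hmem
  rw [LinearMap.mem_ker] at hbad
  simp at hbad

/-- For `n ≥ 3` there exist two indecomposable `n`-Kronecker modules with the
same dimension vector `(3,2)`, one of which is generated by its length-2
submodules (bristled) and one of which is not. -/
theorem exists_bristled_and_nonbristled_dim32 (n : ℕ) (hn : 3 ≤ n) :
    ∃ α β : Fin n → ((Fin 3 → k) →ₗ[k] (Fin 2 → k)),
      KronIndec k n (Fin 3 → k) (Fin 2 → k) α ∧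
      KronBristled k n (Fin 3 → k) (Fin 2 → k) α ∧
      KronIndec k n (Fin 3 → k) (Fin 2 → k) β ∧
      ¬ KronBristled k n (Fin 3 → k) (Fin 2 → k) β := by
  exact ⟨Amod k n, Bmod k n, Aindec k n hn, Abristled k n hn, Bindec k n hn,
    Bnotbristled k n hn⟩
end
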